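/- Let F be a field and Γ a commutative additive monoid with bounded decompositions. Let A be a unital associative F-algebra carrying a coassociative counital F-coalgebra structure with comultiplication Δ and counit ε, such that Δ(1) = 1 ⊗ 1. Suppose A is graded by Γ: A = ⊕_{γ∈Γ} A_γ as an internal direct sum of subspaces, with A_0 = F·1, A_α · A_β ⊆ A_{α+β} for all α, β, Δ respecting the grading (Δ(A_γ) ⊆ Σ_{α+β=γ} A_α ⊗ A_β for every γ), and each A_γ finite-dimensional over F. Let β : A × A → F be a compatible pairing such that β(A_γ, A_δ) = 0 whenever γ ≠ δ, and β(x, x) ≠ 0 for every x ≠ 0. Then A is generated as a unital F-algebra by its primitive elements: the subalgebra generated by Prim(A) equals A. -/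

import Mathlib

/-!
Induct on the degree `γ`, ordered by the number of nonzero summands it can be split into
(finite by bounded decompositions). For `γ ≠ 0` let `D_γ ⊆ A_γ` be the span of products `a c` with
`a`, `c` of nonzero degrees adding up to `γ`; by induction `D_γ` lies in the subalgebra generated by
the primitives. Anisotropy of `β` on the finite-dimensional `A_γ` splits any `x ∈ A_γ` as `d + p`
with `d ∈ D_γ` and `β(D_γ, p) = 0`. Compatibility reads `β(c a, p)` as `β a ⊗ β c` evaluated on
`Δ p`; with the grading this shows that every `β a ⊗ β c` kills `Δ p - p ⊗ 1 - 1 ⊗ p`. Since the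
blocks `A_σ ⊗ A_τ` are mutually orthogonal and `β ⊗ β` is nondegenerate on each of them, `p` is
primitive.
-/

open TensorProduct

/-- The subspace of primitive elements of `A`: those `x` with
`Δ(x) = x ⊗ 1 + 1 ⊗ x`. -/
def PrimSubmodule (F A : Type*) [Field F] [Ring A] [Algebra F A]
    [Coalgebra F A] : Submodule F A where
  carrier := {x | Coalgebra.comul x = x ⊗ₜ[F] (1 : A) + (1 : A) ⊗ₜ[F] x}
  add_mem' := by
    intro a b ha hb
    simp only [Set.mem_setOf_eq] at *
    rw [map_add, ha, hb, TensorProduct.add_tmul, TensorProduct.tmul_add]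
    abel
  zero_mem' := by simp
  smul_mem' := by
    intro c a ha
    simp only [Set.mem_setOf_eq] at *
    rw [map_smul, ha, smul_add, TensorProduct.smul_tmul', ← TensorProduct.tmul_smul]

section Anisotropic

variable {F M : Type*} [Field F] [AddCommGroup M] [Module F M] (β : M →ₗ[F] M →ₗ[F] F)

theorem nondegenerate_restrict_of_anisotropic {V : Submodule F M}
    (hV : ∀ x ∈ V, x ≠ 0 → β x x ≠ 0) :
    LinearMap.BilinForm.Nondegenerate (β.compl₁₂ V.subtype V.subtype) := by
  have h : ∀ x : V, β x x = 0 → x = 0 := fun x hx ↦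
    Subtype.ext (not_not.mp fun hne ↦ hV x x.2 hne hx)
  exact ⟨fun x hx ↦ h x (hx x), fun y hy ↦ h y (hy y)⟩

theorem exists_sub_orthogonal_of_anisotropic {D : Submodule F M} [FiniteDimensional F D]
    (hD : ∀ x ∈ D, x ≠ 0 → β x x ≠ 0) (x : M) :
    ∃ d ∈ D, ∀ e ∈ D, β e (x - d) = 0 := by
  set B := (β.compl₁₂ D.subtype D.subtype).flip
  have hB : B.Nondegenerate := (nondegenerate_restrict_of_anisotropic β hD).flip
  refine ⟨_, ((LinearMap.BilinForm.toDual B hB).symm ((β.flip x).comp D.subtype)).2,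
    fun e he ↦ ?_⟩
  have := LinearMap.BilinForm.apply_toDual_symm_apply (hB := hB)
    ((β.flip x).comp D.subtype) ⟨e, he⟩
  simp only [B, LinearMap.flip_apply, LinearMap.compl₁₂_apply, Submodule.subtype_apply,
    LinearMap.comp_apply] at this
  rw [map_sub, this, sub_self]

theorem eq_zero_of_lift_mul_eq_zero_of_mem_map₂ {V W : Submodule F M}
    [FiniteDimensional F V] [FiniteDimensional F W]
    (hV : ∀ x ∈ V, x ≠ 0 → β x x ≠ 0) (hW : ∀ x ∈ W, x ≠ 0 → β x x ≠ 0)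
    {t : M ⊗[F] M} (ht : t ∈ Submodule.map₂ (mk F M M) V W)
    (h : ∀ a ∈ V, ∀ c ∈ W, lift ((LinearMap.mul F F).compl₁₂ (β a) (β c)) t = 0) :
    t = 0 := by
  rw [← range_mapIncl] at ht
  obtain ⟨t, rfl⟩ := ht
  let e : V ⊗[F] W ≃ₗ[F] Module.Dual F (V ⊗[F] W) :=
    (congr (LinearMap.BilinForm.toDual _ (nondegenerate_restrict_of_anisotropic β hV).flip)
      (LinearMap.BilinForm.toDual _ (nondegenerate_restrict_of_anisotropic β hW).flip)).trans
      (dualDistribEquiv F V W)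
  have he : ∀ (u : V) (v : W), e t (u ⊗ₜ v) =
      lift ((LinearMap.mul F F).compl₁₂ (β u) (β v)) (mapIncl V W t) := by
    intro u v
    clear h
    induction t using TensorProduct.induction_on with
    | zero => simp
    | tmul p q => simp [e, LinearMap.BilinForm.toDual_def]
    | add s s' hs hs' => simp only [map_add, LinearMap.add_apply, hs, hs']
  have : e t = 0 := TensorProduct.ext' fun u v ↦ by rw [he, h _ u.2 _ v.2]; rfl
  rw [e.map_eq_zero_iff.mp this, map_zero]

theorem eq_zero_of_lift_mul_eq_zero_of_mem_iSup_map₂ {ι : Type*} {𝒜 : ι → Submodule F M}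
    (hfin : ∀ i, FiniteDimensional F (𝒜 i))
    (horth : ∀ i j, i ≠ j → ∀ x ∈ 𝒜 i, ∀ y ∈ 𝒜 j, β x y = 0)
    (haniso : ∀ x : M, x ≠ 0 → β x x ≠ 0)
    {y : M ⊗[F] M} (hy : y ∈ ⨆ p : ι × ι, Submodule.map₂ (mk F M M) (𝒜 p.1) (𝒜 p.2))
    (h : ∀ i j, ∀ a ∈ 𝒜 i, ∀ c ∈ 𝒜 j,
      lift ((LinearMap.mul F F).compl₁₂ (β a) (β c)) y = 0) :
    y = 0 := by
  obtain ⟨f, hf, rfl⟩ := (Submodule.mem_iSup_iff_exists_finsupp _ _).mp hy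
  suffices ∀ p, f p = 0 by simp [Finsupp.sum, this]
  intro p
  have := hfin p.1
  have := hfin p.2
  refine eq_zero_of_lift_mul_eq_zero_of_mem_map₂ β (fun x _ ↦ haniso x) (fun x _ ↦ haniso x)
    (hf p) fun a ha c hc ↦ ?_
  set L := lift ((LinearMap.mul F F).compl₁₂ (β a) (β c))
  have hL : ∀ q ≠ p, L (f q) = 0 := by
    intro q hq
    refine Submodule.map₂_le (r := LinearMap.ker L).mpr (fun u hu v hv ↦ ?_) (hf q)
    rcases not_and_or.mp (hq ∘ Prod.ext_iff.mpr) with h1 | h2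
    · simp [L, horth _ _ (Ne.symm h1) a ha u hu]
    · simp [L, horth _ _ (Ne.symm h2) c hc v hv]
  calc L (f p) = L (f.sum fun _ m ↦ m) := by
        rw [map_finsuppSum, Finsupp.sum_eq_single p (fun q _ hq ↦ hL q hq) fun _ ↦ map_zero L]
    _ = 0 := h p.1 p.2 a ha c hc

end Anisotropic

def HasBoundedDecompositions (Γ : Type*) [AddCommMonoid Γ] : Prop :=
  ∀ γ : Γ, γ ≠ 0 → ∃ h : ℕ, ∀ l : List Γ, (∀ x ∈ l, x ≠ 0) → l.sum = γ → l.length ≤ h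

namespace HasBoundedDecompositions

variable {Γ : Type*} [AddCommMonoid Γ]

/-- The largest number of nonzero summands of `γ` (junk value `sInf ∅ = 0` if unbounded). -/
noncomputable def height (γ : Γ) : ℕ :=
  sInf {n | ∀ l : List Γ, (∀ x ∈ l, x ≠ 0) → l.sum = γ → l.length ≤ n}

theorem length_le_height (hΓ : HasBoundedDecompositions Γ) {γ : Γ} (hγ : γ ≠ 0)
    {l : List Γ} (hl : ∀ x ∈ l, x ≠ 0) (hsum : l.sum = γ) : l.length ≤ height γ :=
  Nat.sInf_mem (hΓ γ hγ) l hl hsum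

theorem height_lt_of_add_eq (hΓ : HasBoundedDecompositions Γ) {α δ γ : Γ} (hδ : δ ≠ 0) (hγ : γ ≠ 0) (hsum : α + δ = γ) : height α < height γ := by
  have hpos : 1 ≤ height γ := hΓ.length_le_height hγ (l := [γ]) (by simpa using hγ) (by simp)
  have : height α ≤ height γ - 1 := Nat.sInf_le fun l hl hlsum ↦ by
    have := hΓ.length_le_height hγ (l := l ++ [δ])
      (by simpa [or_imp, forall_and] using ⟨hl, hδ⟩) (by simp [hlsum, hsum])
    simp at this
    omega
  omega

theorem induction (hΓ : HasBoundedDecompositions Γ) {P : Γ → Prop} (zero : P 0)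
    (step : ∀ γ, γ ≠ 0 → (∀ α δ, δ ≠ 0 → α + δ = γ → P α) → P γ) (γ : Γ) : P γ := by
  induction hn : height γ using Nat.strong_induction_on generalizing γ with
  | _ n ih =>
    by_cases hγ : γ = 0
    · exact hγ ▸ zero
    exact step γ hγ fun α δ hδ hsum ↦
      ih _ (hn ▸ hΓ.height_lt_of_add_eq hδ hγ hsum) α rfl

end HasBoundedDecompositions

section Graded

variable {F Γ A : Type*} [Field F] [AddCommMonoid Γ] [Ring A] [Algebra F A]
  (𝒜 : Γ → Submodule F A)

def decomposablePart (γ : Γ) : Submodule F A :=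
  ⨆ (p : Γ × Γ) (_ : p.1 ≠ 0 ∧ p.2 ≠ 0 ∧ p.1 + p.2 = γ), 𝒜 p.1 * 𝒜 p.2

variable {𝒜}

theorem mul_mem_decomposablePart {σ τ : Γ} (hσ : σ ≠ 0) (hτ : τ ≠ 0) {a c : A}
    (ha : a ∈ 𝒜 σ) (hc : c ∈ 𝒜 τ) : a * c ∈ decomposablePart 𝒜 (σ + τ) :=
  (le_iSup₂ (f := fun (p : Γ × Γ) (_ : p.1 ≠ 0 ∧ p.2 ≠ 0 ∧ p.1 + p.2 = σ + τ) ↦ 𝒜 p.1 * 𝒜 p.2)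
    (σ, τ) ⟨hσ, hτ, rfl⟩) (Submodule.mul_mem_mul ha hc)

theorem decomposablePart_le (hgradedmul : ∀ α β : Γ, 𝒜 α * 𝒜 β ≤ 𝒜 (α + β)) (γ : Γ) :
    decomposablePart 𝒜 γ ≤ 𝒜 γ :=
  iSup₂_le fun p hp ↦ hp.2.2 ▸ hgradedmul p.1 p.2

theorem decomposablePart_le_subalgebra {S : Subalgebra F A} {γ : Γ}
    (h : ∀ α δ, δ ≠ 0 → α + δ = γ → 𝒜 α ≤ Subalgebra.toSubmodule S) :
    decomposablePart 𝒜 γ ≤ Subalgebra.toSubmodule S := by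
  refine iSup₂_le fun p ⟨h1, h2, hsum⟩ ↦ Submodule.mul_le.mpr fun a ha c hc ↦ ?_
  exact S.mul_mem (h _ _ h2 hsum ha) (h _ _ h1 (add_comm p.1 p.2 ▸ hsum) hc)

theorem counit_one_of_comul_one [Coalgebra F A] [Nontrivial A]
    (hone : Coalgebra.comul (1 : A) = (1 : A) ⊗ₜ[F] (1 : A)) :
    Coalgebra.counit (R := F) (1 : A) = 1 := by
  have := congrArg (TensorProduct.lid F A) (Coalgebra.rTensor_counit_comul (R := F) (1 : A))
  rw [hone, LinearMap.rTensor_tmul, TensorProduct.lid_tmul, TensorProduct.lid_tmul] at this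
  exact smul_left_injective F one_ne_zero this

theorem apply_mul_eq_of_orthogonal_decomposablePart (h0 : 𝒜 0 = 1)
    (hgradedmul : ∀ α β : Γ, 𝒜 α * 𝒜 β ≤ 𝒜 (α + β)) (β : A →ₗ[F] A →ₗ[F] F)
    (hβ1 : β 1 1 = 1)
    (horth : ∀ γ δ : Γ, γ ≠ δ → ∀ x ∈ 𝒜 γ, ∀ y ∈ 𝒜 δ, β x y = 0)
    {γ : Γ} (hγ : γ ≠ 0) {x : A} (hx : x ∈ 𝒜 γ)
    (hperp : ∀ e ∈ decomposablePart 𝒜 γ, β e x = 0)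
    {σ τ : Γ} {a c : A} (ha : a ∈ 𝒜 σ) (hc : c ∈ 𝒜 τ) :
    β (c * a) x = β a x * β c 1 + β a 1 * β c x := by
  have h1mem : (1 : A) ∈ 𝒜 0 := h0 ▸ Submodule.one_le.mp le_rfl
  have h1x : β 1 x = 0 := horth 0 γ hγ.symm 1 h1mem x hx
  by_cases hσ : σ = 0
  · obtain ⟨r, rfl⟩ := Submodule.mem_one.mp (h0 ▸ hσ ▸ ha)
    simp [Algebra.algebraMap_eq_smul_one, h1x, hβ1]
  by_cases hτ : τ = 0
  · obtain ⟨r, rfl⟩ := Submodule.mem_one.mp (h0 ▸ hτ ▸ hc)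
    simp [Algebra.algebraMap_eq_smul_one, h1x, hβ1, mul_comm]
  rw [horth σ 0 hσ a ha 1 h1mem, horth τ 0 hτ c hc 1 h1mem, mul_zero, zero_mul, add_zero]
  by_cases hsum : τ + σ = γ
  · exact hperp _ (hsum ▸ mul_mem_decomposablePart hτ hσ hc ha)
  · exact horth _ _ hsum _ (hgradedmul τ σ (Submodule.mul_mem_mul hc ha)) x hx

theorem mem_primSubmodule_of_orthogonal_decomposablePart [Coalgebra F A] (h0 : 𝒜 0 = 1)
    (hgradedmul : ∀ α β : Γ, 𝒜 α * 𝒜 β ≤ 𝒜 (α + β))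
    (hΔ : ∀ γ : Γ, ∀ x ∈ 𝒜 γ, Coalgebra.comul x ∈
      ⨆ p : {p : Γ × Γ // p.1 + p.2 = γ},
        Submodule.map₂ (TensorProduct.mk F A A) (𝒜 (p : Γ × Γ).1) (𝒜 (p : Γ × Γ).2))
    (hfin : ∀ γ : Γ, FiniteDimensional F (𝒜 γ))
    (β : A →ₗ[F] A →ₗ[F] F)
    (hmul : ∀ a a' c : A, β (a * a') c =
      TensorProduct.lift ((LinearMap.mul F F).compl₁₂ (β a') (β a))
        (Coalgebra.comul c))
    (hβ1 : β 1 1 = 1)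
    (horth : ∀ γ δ : Γ, γ ≠ δ → ∀ x ∈ 𝒜 γ, ∀ y ∈ 𝒜 δ, β x y = 0)
    (haniso : ∀ x : A, x ≠ 0 → β x x ≠ 0)
    {γ : Γ} (hγ : γ ≠ 0) {x : A} (hx : x ∈ 𝒜 γ)
    (hperp : ∀ e ∈ decomposablePart 𝒜 γ, β e x = 0) :
    x ∈ PrimSubmodule F A := by
  have h1mem : (1 : A) ∈ 𝒜 0 := h0 ▸ Submodule.one_le.mp le_rfl
  let block (p : Γ × Γ) := Submodule.map₂ (mk F A A) (𝒜 p.1) (𝒜 p.2)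
  have hS : ∀ p : Γ × Γ, ∀ u ∈ 𝒜 p.1, ∀ v ∈ 𝒜 p.2, u ⊗ₜ[F] v ∈ ⨆ p, block p :=
    fun p u hu v hv ↦ le_iSup block p (Submodule.apply_mem_map₂ _ hu hv)
  have hΔS : Coalgebra.comul x ∈ ⨆ p, block p := iSup_comp_le block Subtype.val (hΔ γ x hx)
  change Coalgebra.comul x = x ⊗ₜ[F] 1 + 1 ⊗ₜ[F] x
  rw [← sub_eq_zero, ← sub_sub]
  refine eq_zero_of_lift_mul_eq_zero_of_mem_iSup_map₂ β hfin horth haniso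
    (sub_mem (sub_mem hΔS (hS (γ, 0) x hx 1 h1mem)) (hS (0, γ) 1 h1mem x hx))
    fun σ τ a ha c hc ↦ ?_
  rw [map_sub, map_sub, ← hmul, apply_mul_eq_of_orthogonal_decomposablePart h0 hgradedmul β hβ1
    horth hγ hx hperp ha hc]
  simp

end Graded

/-- Let `Γ` be a commutative additive monoid with bounded
decompositions and `A` a unital `F`-algebra and `F`-coalgebra with `Δ(1) = 1 ⊗ 1`,
graded by `Γ` with `A_0 = F·1`, `A_α · A_β ⊆ A_{α+β}`, `Δ` respecting the grading and
each `A_γ` finite-dimensional. If `β` is a compatible pairing with `β(A_γ, A_δ) = 0` for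
`γ ≠ δ` and `β(x, x) ≠ 0` for `x ≠ 0`, then `A` is generated as a unital `F`-algebra by
its primitive elements. -/
theorem statement15 (F : Type*) [Field F]
    (Γ : Type*) [AddCommMonoid Γ] [DecidableEq Γ]
    -- `Γ` has bounded decompositions
    (hbdd : ∀ γ : Γ, γ ≠ 0 → ∃ h : ℕ, ∀ l : List Γ,
      (∀ x ∈ l, x ≠ 0) → l.sum = γ → l.length ≤ h)
    (A : Type*) [Ring A] [Algebra F A] [Coalgebra F A]
    (hone : Coalgebra.comul (1 : A) = (1 : A) ⊗ₜ[F] (1 : A))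
    (𝒜 : Γ → Submodule F A)
    (hinternal : DirectSum.IsInternal 𝒜)
    (h0 : 𝒜 0 = (1 : Submodule F A))
    (hgradedmul : ∀ α β : Γ, 𝒜 α * 𝒜 β ≤ 𝒜 (α + β))
    -- `Δ` respects the grading
    (hΔ : ∀ γ : Γ, ∀ x ∈ 𝒜 γ, Coalgebra.comul x ∈
      ⨆ p : {p : Γ × Γ // p.1 + p.2 = γ},
        Submodule.map₂ (TensorProduct.mk F A A) (𝒜 (p : Γ × Γ).1) (𝒜 (p : Γ × Γ).2))
    (hfin : ∀ γ : Γ, FiniteDimensional F (𝒜 γ))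
    (β : A →ₗ[F] A →ₗ[F] F)
    -- compatibility: `β(a·a', c) = Σ β(a, c₍₂₎)·β(a', c₍₁₎)`
    (hmul : ∀ a a' c : A, β (a * a') c =
      TensorProduct.lift ((LinearMap.mul F F).compl₁₂ (β a') (β a))
        (Coalgebra.comul c))
    -- `ε(c) = β(1, c)`
    (hcounit : ∀ c : A, Coalgebra.counit c = β 1 c)
    -- orthogonality of distinct graded components
    (horth : ∀ γ δ : Γ, γ ≠ δ → ∀ x ∈ 𝒜 γ, ∀ y ∈ 𝒜 δ, β x y = 0)
    -- anisotropy
    (haniso : ∀ x : A, x ≠ 0 → β x x ≠ 0) :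
    Algebra.adjoin F ((PrimSubmodule F A : Set A)) = ⊤ := by
  rcases subsingleton_or_nontrivial A with hA | hA
  · exact Subsingleton.elim _ _
  have hβ1 : β 1 1 = 1 := by rw [← hcounit, counit_one_of_comul_one hone]
  set B := Algebra.adjoin F (PrimSubmodule F A : Set A)
  suffices h : ∀ γ, 𝒜 γ ≤ Subalgebra.toSubmodule B by
    rw [← Algebra.toSubmodule_eq_top, eq_top_iff, ← hinternal.submodule_iSup_eq_top]
    exact iSup_le h
  refine HasBoundedDecompositions.induction hbdd ?_ fun γ hγ ih ↦ ?_
  · rw [h0]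
    exact Submodule.one_le.mpr B.one_mem
  intro x hx
  have hDγ : decomposablePart 𝒜 γ ≤ 𝒜 γ := decomposablePart_le hgradedmul γ
  have := hfin γ
  have : FiniteDimensional F (decomposablePart 𝒜 γ) := Submodule.finiteDimensional_of_le hDγ
  obtain ⟨d, hd, hperp⟩ := exists_sub_orthogonal_of_anisotropic β (D := decomposablePart 𝒜 γ)
    (fun y _ ↦ haniso y) x
  have hprim := mem_primSubmodule_of_orthogonal_decomposablePart h0 hgradedmul hΔ hfin β hmul hβ1
    horth haniso hγ (sub_mem hx (hDγ hd)) hperp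
  rw [← add_sub_cancel d x]
  exact B.add_mem (decomposablePart_le_subalgebra ih hd) (Algebra.subset_adjoin hprim)
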